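/- arXiv:1709.02532 — 2 statements merged into one kernel-verified Lean document; each statement's English description precedes it below -/
import Mathlib

section
/- For every integer q ≥ 1 and every x ∈ ℝ^q, the integral ∫_{ℝ^q} (1 − cos⟨t, x⟩) / (K_q |t|^{q+1}) dt equals |x|, where K_q = π^{(q+1)/2} / Γ((q+1)/2), |·| is the Euclidean norm, and ⟨·,·⟩ the Euclidean inner product (the integrand is extended by 0 at t = 0). -/
/-!
Subordination: for `t ≠ 0` and `s = (q + 1) / 2`,
`‖t‖^{-(q+1)} = Γ(s)⁻¹ ∫₀^∞ u^{s-1} e^{-u‖t‖²} du`. Exchanging the integrals (Tonelli, everything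
is nonnegative), the integral over `t` becomes the Gaussian one
`∫ (1 - cos⟪t, x⟫) e^{-u‖t‖²} dt = (π/u)^{q/2} (1 - e^{-‖x‖²/(4u)})`, which leaves
`∫₀^∞ u^{-1/2} (1 - e^{-b/u}) du = 2√(πb)` with `b = ‖x‖²/4`. The powers of `π` and the factor
`Γ(s)⁻¹` combine into exactly `K_q`.
-/

open MeasureTheory
open scoped RealInnerProductSpace Classical

/-- The constant `K_q = π^{(q+1)/2} / Γ((q+1)/2)`. -/
noncomputable def Kconst (q : ℕ) : ℝ :=
  Real.pi ^ ((q + 1 : ℝ) / 2) / Real.Gamma ((q + 1 : ℝ) / 2)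

open Real Set
open scoped ENNReal

lemma lintegral_rpow_mul_exp_neg_mul_Ioi {a s : ℝ} (ha : 0 < a) (hs : 0 < s) :
    ∫⁻ u in Ioi 0, ENNReal.ofReal (u ^ (s - 1) * exp (-(a * u))) =
      ENNReal.ofReal (Gamma s / a ^ s) := by
  have hint : IntegrableOn (fun u : ℝ ↦ u ^ (s - 1) * exp (-(a * u))) (Ioi 0) := by
    simpa using integrableOn_rpow_mul_exp_neg_mul_rpow (by linarith : -1 < s - 1) one_pos ha
  rw [← ofReal_integral_eq_lintegral_ofReal hint, integral_rpow_mul_exp_neg_mul_Ioi hs ha,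
    one_div, inv_rpow ha.le, inv_mul_eq_div]
  filter_upwards [ae_restrict_mem measurableSet_Ioi] with u hu
  exact mul_nonneg (rpow_nonneg (le_of_lt hu) _) (exp_pos _).le

lemma lintegral_exp_neg_Ioo {T : ℝ} (hT : 0 ≤ T) :
    ∫⁻ w in Ioo 0 T, ENNReal.ofReal (exp (-w)) = ENNReal.ofReal (1 - exp (-T)) := by
  have hint : IntegrableOn (fun w : ℝ ↦ exp (-w)) (Ioo 0 T) :=
    (continuous_exp.comp continuous_neg).integrableOn_Icc.mono_set Ioo_subset_Icc_self
  rw [← ofReal_integral_eq_lintegral_ofReal hint (ae_of_all _ fun w ↦ (exp_pos _).le),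
    ← integral_Ioc_eq_integral_Ioo, ← intervalIntegral.integral_of_le hT,
    intervalIntegral.integral_comp_neg (fun w ↦ exp w), integral_exp]
  simp

lemma lintegral_rpow_neg_half_Ioo {T : ℝ} (hT : 0 ≤ T) :
    ∫⁻ u in Ioo 0 T, ENNReal.ofReal (u ^ (-(1 / 2) : ℝ)) = ENNReal.ofReal (2 * √T) := by
  have hexp : (-1 : ℝ) < -(1 / 2) := by norm_num
  have hint : IntegrableOn (fun u : ℝ ↦ u ^ (-(1 / 2) : ℝ)) (Ioo 0 T) :=
    (intervalIntegrable_iff_integrableOn_Ioo_of_le hT).mp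
      (intervalIntegral.intervalIntegrable_rpow' hexp)
  have hnonneg : 0 ≤ᵐ[volume.restrict (Ioo 0 T)] fun u : ℝ ↦ u ^ (-(1 / 2) : ℝ) := by
    filter_upwards [ae_restrict_mem measurableSet_Ioo] with u hu
    exact rpow_nonneg hu.1.le _
  rw [← ofReal_integral_eq_lintegral_ofReal hint hnonneg, ← integral_Ioc_eq_integral_Ioo,
    ← intervalIntegral.integral_of_le hT, integral_rpow (Or.inl hexp),
    zero_rpow (by norm_num), sqrt_eq_rpow]
  congr 1
  norm_num
  ring

lemma lintegral_Ioi_ite_mul_lt {a : ℝ} (ha : 0 < a) (b : ℝ) (f : ℝ → ℝ≥0∞) :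
    ∫⁻ w in Ioi 0, (if a * w < b then f w else 0) = ∫⁻ w in Ioo 0 (b / a), f w := by
  have hind : (fun w ↦ if a * w < b then f w else 0) = (Iio (b / a)).indicator f := by
    ext w
    simp [indicator, lt_div_iff₀ ha, mul_comm]
  rw [hind, lintegral_indicator measurableSet_Iio, Measure.restrict_restrict measurableSet_Iio,
    Iio_inter_Ioi]

lemma lintegral_rpow_neg_half_mul_one_sub_exp_neg_div {b : ℝ} (hb : 0 ≤ b) :
    ∫⁻ u in Ioi 0, ENNReal.ofReal (u ^ (-(1 / 2) : ℝ) * (1 - exp (-(b / u)))) =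
      ENNReal.ofReal (2 * √(π * b)) := by
  -- `1 - e^{-b/u} = ∫_{0 < w < b/u} e^{-w} dw`; then integrate over `{uw < b}` in the other order.
  set F : ℝ → ℝ → ℝ≥0∞ := fun u w ↦
    if u * w < b then ENNReal.ofReal (u ^ (-(1 / 2) : ℝ)) * ENNReal.ofReal (exp (-w)) else 0
  have hF : Measurable (Function.uncurry F) :=
    Measurable.ite (measurableSet_lt (by fun_prop) measurable_const) (by fun_prop)
      measurable_const
  have integral_w : ∀ u ∈ Ioi (0 : ℝ), ∫⁻ w in Ioi 0, F u w =
      ENNReal.ofReal (u ^ (-(1 / 2) : ℝ) * (1 - exp (-(b / u)))) := by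
    intro u hu
    rw [lintegral_Ioi_ite_mul_lt hu, lintegral_const_mul' _ _ ENNReal.ofReal_ne_top,
      lintegral_exp_neg_Ioo (div_nonneg hb hu.le), ← ENNReal.ofReal_mul (rpow_nonneg hu.le _)]
  have integral_u : ∀ w ∈ Ioi (0 : ℝ), ∫⁻ u in Ioi 0, F u w =
      ENNReal.ofReal (2 * √b) * ENNReal.ofReal (w ^ (1 / 2 - 1 : ℝ) * exp (-(1 * w))) := by
    intro w hw
    simp_rw [F, mul_comm _ w]
    rw [lintegral_Ioi_ite_mul_lt hw, lintegral_mul_const' _ _ ENNReal.ofReal_ne_top,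
      lintegral_rpow_neg_half_Ioo (div_nonneg hb hw.le), ← ENNReal.ofReal_mul (by positivity),
      ← ENNReal.ofReal_mul (by positivity)]
    congr 1
    rw [show (1 / 2 - 1 : ℝ) = -(1 / 2) by norm_num, rpow_neg hw.le, sqrt_div' _ hw.le,
      sqrt_eq_rpow w, mul_one]
    ring
  calc ∫⁻ u in Ioi 0, ENNReal.ofReal (u ^ (-(1 / 2) : ℝ) * (1 - exp (-(b / u))))
      = ∫⁻ u in Ioi 0, ∫⁻ w in Ioi 0, F u w :=
        (setLIntegral_congr_fun measurableSet_Ioi integral_w).symm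
    _ = ∫⁻ w in Ioi 0, ∫⁻ u in Ioi 0, F u w := lintegral_lintegral_swap hF.aemeasurable
    _ = ∫⁻ w in Ioi 0,
          ENNReal.ofReal (2 * √b) * ENNReal.ofReal (w ^ (1 / 2 - 1 : ℝ) * exp (-(1 * w))) :=
        setLIntegral_congr_fun measurableSet_Ioi integral_u
    _ = ENNReal.ofReal (2 * √(π * b)) := by
      rw [lintegral_const_mul' _ _ ENNReal.ofReal_ne_top,
        lintegral_rpow_mul_exp_neg_mul_Ioi one_pos one_half_pos,
        ← ENNReal.ofReal_mul (by positivity),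
        Gamma_one_half_eq, one_rpow, div_one, sqrt_mul pi_pos.le]
      ring_nf

lemma ofReal_div_pow_eq_lintegral_rpow_mul_exp {c r : ℝ} (hc : 0 ≤ c) (hr : 0 < r) (n : ℕ) :
    ENNReal.ofReal (c / r ^ (n + 1)) =
      ENNReal.ofReal ((Gamma ((n + 1) / 2))⁻¹) *
        ∫⁻ u in Ioi 0, ENNReal.ofReal (c * (u ^ ((n + 1) / 2 - 1 : ℝ) * exp (-(r ^ 2 * u)))) := by
  have hs : (0 : ℝ) < (n + 1) / 2 := by positivity
  have hpow : (r ^ 2) ^ ((n + 1) / 2 : ℝ) = r ^ (n + 1) := by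
    rw [← rpow_natCast, ← rpow_mul hr.le, ← rpow_natCast]
    push_cast
    ring_nf
  simp_rw [ENNReal.ofReal_mul hc]
  rw [lintegral_const_mul' _ _ ENNReal.ofReal_ne_top,
    lintegral_rpow_mul_exp_neg_mul_Ioi (by positivity) hs, hpow, ← ENNReal.ofReal_mul hc,
    ← ENNReal.ofReal_mul (inv_nonneg.mpr (Gamma_pos_of_pos hs).le)]
  congr 1
  field_simp [(Gamma_pos_of_pos hs).ne']

lemma Kconst_pos (q : ℕ) : 0 < Kconst q := by
  unfold Kconst
  positivity

-- The `0 * ⟪x, t⟫` puts both Gaussians in the shape of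
-- `GaussianFourier.integral_cexp_neg_mul_sq_norm_add`.
lemma one_sub_cos_inner_mul_exp_eq_re {V : Type*} [NormedAddCommGroup V] [InnerProductSpace ℝ V]
    (u : ℝ) (x t : V) :
    (1 - cos ⟪t, x⟫) * exp (-u * ‖t‖ ^ 2) =
      (Complex.exp (-u * ‖t‖ ^ 2 + 0 * ⟪x, t⟫) -
        Complex.exp (-u * ‖t‖ ^ 2 + Complex.I * ⟪x, t⟫)).re := by
  have h : ∀ c : ℂ, -(u : ℂ) * (‖t‖ : ℂ) ^ 2 + c * ⟪x, t⟫ =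
      ((-u * ‖t‖ ^ 2 : ℝ) : ℂ) + c * ⟪x, t⟫ := by
    intro c; push_cast; ring
  rw [h, h, Complex.sub_re, Complex.exp_re, Complex.exp_re]
  simp only [Complex.add_re, Complex.add_im, Complex.ofReal_re, Complex.ofReal_im, Complex.mul_re,
    Complex.mul_im, Complex.I_re, Complex.I_im, real_inner_comm,
    zero_mul, one_mul, mul_zero, sub_zero, add_zero, zero_add, cos_zero]
  ring

section InnerProductSpace

variable {V : Type*} [NormedAddCommGroup V] [InnerProductSpace ℝ V] [FiniteDimensional ℝ V]
  [MeasurableSpace V] [BorelSpace V]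

lemma integrable_one_sub_cos_inner_mul_exp_neg_mul_sq_norm {u : ℝ} (hu : 0 < u) (x : V) :
    Integrable fun t : V ↦ (1 - cos ⟪t, x⟫) * exp (-u * ‖t‖ ^ 2) := by
  have hu' : 0 < (u : ℂ).re := by simpa using hu
  simp_rw [one_sub_cos_inner_mul_exp_eq_re]
  exact ((GaussianFourier.integrable_cexp_neg_mul_sq_norm_add hu' 0 x).sub
    (GaussianFourier.integrable_cexp_neg_mul_sq_norm_add hu' Complex.I x)).re

lemma integral_one_sub_cos_inner_mul_exp_neg_mul_sq_norm {u : ℝ} (hu : 0 < u) (x : V) :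
    ∫ t : V, (1 - cos ⟪t, x⟫) * exp (-u * ‖t‖ ^ 2) =
      (π / u) ^ (Module.finrank ℝ V / 2 : ℝ) * (1 - exp (-(‖x‖ ^ 2 / (4 * u)))) := by
  have hu' : 0 < (u : ℂ).re := by simpa using hu
  have h0 := GaussianFourier.integrable_cexp_neg_mul_sq_norm_add hu' 0 x
  have hI := GaussianFourier.integrable_cexp_neg_mul_sq_norm_add hu' Complex.I x
  have hre := integral_re (h0.sub hI)
  simp only [Pi.sub_apply, RCLike.re_to_complex] at hre
  simp_rw [one_sub_cos_inner_mul_exp_eq_re, hre, integral_sub h0 hI,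
    GaussianFourier.integral_cexp_neg_mul_sq_norm_add hu']
  rw [← Complex.ofReal_re ((π / u) ^ (Module.finrank ℝ V / 2 : ℝ) * _)]
  congr 1
  push_cast [Complex.ofReal_cpow (by positivity : 0 ≤ π / u)]
  simp only [Complex.I_sq, neg_one_mul, neg_div, ne_eq, OfNat.ofNat_ne_zero, not_false_eq_true,
    zero_pow, zero_mul, zero_div, Complex.exp_zero]
  ring

lemma lintegral_one_sub_cos_inner_mul_rpow_mul_exp {u : ℝ} (hu : 0 < u) (x : V) :
    ∫⁻ t : V, ENNReal.ofReal ((1 - cos ⟪t, x⟫) *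
        (u ^ ((Module.finrank ℝ V + 1) / 2 - 1 : ℝ) * exp (-(‖t‖ ^ 2 * u)))) =
      ENNReal.ofReal (π ^ (Module.finrank ℝ V / 2 : ℝ)) *
        ENNReal.ofReal (u ^ (-(1 / 2) : ℝ) * (1 - exp (-(‖x‖ ^ 2 / 4 / u)))) := by
  have hcos : ∀ t : V, 0 ≤ (1 - cos ⟪t, x⟫) * exp (-u * ‖t‖ ^ 2) :=
    fun t ↦ mul_nonneg (sub_nonneg.mpr (cos_le_one _)) (exp_pos _).le
  have hfactor : ∀ t : V, ENNReal.ofReal ((1 - cos ⟪t, x⟫) *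
      (u ^ ((Module.finrank ℝ V + 1) / 2 - 1 : ℝ) * exp (-(‖t‖ ^ 2 * u)))) =
      ENNReal.ofReal (u ^ ((Module.finrank ℝ V + 1) / 2 - 1 : ℝ)) *
        ENNReal.ofReal ((1 - cos ⟪t, x⟫) * exp (-u * ‖t‖ ^ 2)) := fun t ↦ by
    rw [← ENNReal.ofReal_mul (rpow_nonneg hu.le _)]
    ring_nf
  have hexp : u ^ ((Module.finrank ℝ V + 1) / 2 - 1 : ℝ) =
      u ^ (-(1 / 2) : ℝ) * u ^ (Module.finrank ℝ V / 2 : ℝ) := by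
    rw [← rpow_add hu]; ring_nf
  rw [lintegral_congr hfactor, lintegral_const_mul' _ _ ENNReal.ofReal_ne_top,
    ← ofReal_integral_eq_lintegral_ofReal
      (integrable_one_sub_cos_inner_mul_exp_neg_mul_sq_norm hu x) (ae_of_all _ hcos),
    integral_one_sub_cos_inner_mul_exp_neg_mul_sq_norm hu x,
    ← ENNReal.ofReal_mul (rpow_nonneg hu.le _),
    ← ENNReal.ofReal_mul (rpow_nonneg pi_pos.le _)]
  congr 1
  rw [div_rpow pi_pos.le hu.le, div_div, mul_comm 4 u, hexp]
  field_simp [(rpow_pos_of_pos hu (Module.finrank ℝ V / 2 : ℝ)).ne']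

lemma lintegral_one_sub_cos_inner_div_norm_pow (x : V) :
    ∫⁻ t : V, ENNReal.ofReal ((1 - cos ⟪t, x⟫) / ‖t‖ ^ (Module.finrank ℝ V + 1)) =
      ENNReal.ofReal (Kconst (Module.finrank ℝ V) * ‖x‖) := by
  set n := Module.finrank ℝ V
  set s : ℝ := (n + 1) / 2
  have hs : 0 < s := by positivity
  set G : V → ℝ → ℝ≥0∞ := fun t u ↦
    ENNReal.ofReal ((1 - cos ⟪t, x⟫) * (u ^ (s - 1) * exp (-(‖t‖ ^ 2 * u))))
  have hG : Measurable (Function.uncurry G) := by fun_prop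
  have subordination : ∀ t : V, ENNReal.ofReal ((1 - cos ⟪t, x⟫) / ‖t‖ ^ (n + 1)) =
      ENNReal.ofReal ((Gamma s)⁻¹) * ∫⁻ u in Ioi 0, G t u := by
    intro t
    rcases eq_or_ne t 0 with rfl | ht
    · simp [G]
    · exact ofReal_div_pow_eq_lintegral_rpow_mul_exp (sub_nonneg.mpr (cos_le_one _))
        (norm_pos_iff.mpr ht) n
  calc ∫⁻ t : V, ENNReal.ofReal ((1 - cos ⟪t, x⟫) / ‖t‖ ^ (n + 1))
      = ENNReal.ofReal ((Gamma s)⁻¹) * ∫⁻ u in Ioi 0, ∫⁻ t, G t u := by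
        rw [lintegral_congr subordination, lintegral_const_mul' _ _ ENNReal.ofReal_ne_top,
          lintegral_lintegral_swap hG.aemeasurable]
    _ = ENNReal.ofReal ((Gamma s)⁻¹) * ∫⁻ u in Ioi 0, ENNReal.ofReal (π ^ (n / 2 : ℝ)) *
          ENNReal.ofReal (u ^ (-(1 / 2) : ℝ) * (1 - exp (-(‖x‖ ^ 2 / 4 / u)))) := by
        rw [setLIntegral_congr_fun measurableSet_Ioi
          fun u hu ↦ lintegral_one_sub_cos_inner_mul_rpow_mul_exp hu x]
    _ = ENNReal.ofReal (Kconst n * ‖x‖) := by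
        rw [lintegral_const_mul' _ _ ENNReal.ofReal_ne_top,
          lintegral_rpow_neg_half_mul_one_sub_exp_neg_div (by positivity),
          ← ENNReal.ofReal_mul (by positivity), ← ENNReal.ofReal_mul (by positivity)]
        congr 1
        have hsqrt : √(π * (‖x‖ ^ 2 / 4)) = √π * ‖x‖ / 2 := by
          rw [show π * (‖x‖ ^ 2 / 4) = (√π * ‖x‖ / 2) ^ 2 by
            rw [div_pow, mul_pow, sq_sqrt pi_pos.le]; ring, sqrt_sq (by positivity)]
        have hpi : π ^ (n / 2 : ℝ) * √π = π ^ s := by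
          rw [sqrt_eq_rpow, ← rpow_add pi_pos]
          congr 1
          ring
        change _ = π ^ s / Gamma s * ‖x‖
        rw [hsqrt, ← hpi]
        ring

theorem integral_one_sub_cos_inner_div_Kconst_mul_norm_pow (x : V) :
    ∫ t : V, (1 - cos ⟪t, x⟫) / (Kconst (Module.finrank ℝ V) * ‖t‖ ^ (Module.finrank ℝ V + 1)) =
      ‖x‖ := by
  have hK := Kconst_pos (Module.finrank ℝ V)
  have hnonneg : ∀ t : V, 0 ≤ (1 - cos ⟪t, x⟫) / ‖t‖ ^ (Module.finrank ℝ V + 1) :=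
    fun t ↦ div_nonneg (sub_nonneg.mpr (cos_le_one _)) (by positivity)
  simp_rw [div_mul_eq_div_div_swap]
  rw [integral_div, integral_eq_lintegral_of_nonneg_ae (ae_of_all _ hnonneg)
      (by fun_prop : Measurable _).aestronglyMeasurable,
    lintegral_one_sub_cos_inner_div_norm_pow, ENNReal.toReal_ofReal (by positivity)]
  field_simp

end InnerProductSpace

theorem statement0_general (q : ℕ) (x : EuclideanSpace ℝ (Fin q)) :
    (∫ t : EuclideanSpace ℝ (Fin q),
      if t = 0 then (0 : ℝ)
      else (1 - Real.cos ⟪t, x⟫) / (Kconst q * ‖t‖ ^ (q + 1))) = ‖x‖ := by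
  have h := integral_one_sub_cos_inner_div_Kconst_mul_norm_pow x
  rw [finrank_euclideanSpace_fin] at h
  rw [← h]
  congr 1
  ext t
  split_ifs with ht
  · simp [ht]
  · rfl

/-- Lemma 1 of Székely et al.: for every `q ≥ 1` and `x ∈ ℝ^q`,
`∫_{ℝ^q} (1 - cos⟨t, x⟩) / (K_q |t|^{q+1}) dt = |x|`, the integrand being
extended by `0` at `t = 0`. -/
theorem statement0 (q : ℕ) (hq : 1 ≤ q) (x : EuclideanSpace ℝ (Fin q)) :
    (∫ t : EuclideanSpace ℝ (Fin q),
      if t = 0 then (0 : ℝ)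
      else (1 - Real.cos ⟪t, x⟫) / (Kconst q * ‖t‖ ^ (q + 1))) = ‖x‖ :=
  statement0_general q x
end

section
/- Let X_1, X_2, X_3, X_4 be mutually independent random vectors (X_j in ℝ^{p_j}) and let (X^k)_{k=1}^n = ((X_1^k, X_2^k, X_3^k, X_4^k))_{k=1}^n be an i.i.d. sample of (X_1, X_2, X_3, X_4). Define A(t_1, t_2) = φ^n_{(X_1,X_2)}(t_1, t_2) − φ^n_{X_1}(t_1) φ^n_{X_2}(t_2) and B(s_1, s_2) = φ^n_{(X_1,X_2,X_3,X_4)}(s_1, s_2) − φ^n_{(X_1,X_2,X_3)}(s_1) φ^n_{X_4}(s_2), where s_1 is the frequency argument of (X_1, X_2, X_3) and s_2 that of X_4. Then for all t_1, t_2, s_1, s_2: E[A(t_1, t_2)] = 0, E[B(s_1, s_2)] = 0, and E[A(t_1, t_2) · conj(B(s_1, s_2))] = 0; in particular A and B are uncorrelated. -/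
/-! Write `e(x) = exp(ix)`. Both `A` and `conj B` (the latter with all phases negated) have the
form `avgₖ e(gₖ)e(hₖ) - avgₖ e(gₖ) · avgₖ e(hₖ)`, where the phases `gₖ` are measurable with
respect to a σ-algebra `𝓕₁`, the phases `hₖ` with respect to a σ-algebra `𝓕₂` independent of
`𝓕₁`, and `E[e(hₖ)]` does not depend on `k`. For every integrable `𝓕₁`-measurable `F`,
independence factorises `E[F e(gₘ) e(hᵣ)]` for all pairs `m, r`, and it follows that `F` is
orthogonal to this difference. Take `F = 1` for `E[A] = E[B] = 0`, and `F = A` for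
`E[A conj B] = 0`; in the latter case `𝓕₁` is generated by the first three coordinates of all
observations and `𝓕₂` by the fourth. These are independent because all coordinates of all
observations are jointly independent: the observations are independent, and within each one the
coordinates are independent since they are distributed like `(X₁, X₂, X₃, X₄)`. -/

open MeasureTheory ProbabilityTheory Complex Filter
open scoped RealInnerProductSpace

noncomputable section

/-- The empirical characteristic function evaluated along a sample: given real phases
`g k ω` for the `k`-th observation, `empCF n g ω = (1/n) ∑ₖ exp(i · g k ω)`. -/
def empCF {Ω : Type*} (n : ℕ) (g : Fin n → Ω → ℝ) (ω : Ω) : ℂ :=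
  (n : ℂ)⁻¹ * ∑ k, Complex.exp ((g k ω : ℂ) * Complex.I)

namespace ProbabilityTheory

variable {Ω : Type*} {mΩ : MeasurableSpace Ω} {μ : Measure Ω}

lemma IdentDistrib.iIndepFun_eval {ι : Type*} [Fintype ι] {β : ι → Type*}
    [∀ i, MeasurableSpace (β i)] {X : ∀ i, Ω → β i} {Z : Ω → ∀ i, β i}
    (hX : iIndepFun X μ) (h : IdentDistrib Z (fun ω i => X i ω) μ μ) :
    iIndepFun (fun i ω => Z ω i) μ := by
  have := hX.isProbabilityMeasure
  have hcoord : ∀ i, IdentDistrib (fun ω => Z ω i) (X i) μ μ :=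
    fun i => h.comp (measurable_pi_apply i)
  rw [iIndepFun_iff_map_fun_eq_pi_map fun i => (hcoord i).aemeasurable_fst]
  rw [iIndepFun_iff_map_fun_eq_pi_map fun i => (hcoord i).aemeasurable_snd] at hX
  simp only [h.map_eq, hX, (hcoord _).map_eq]

lemma iIndepFun_sample_coord {ι κ : Type*} [Fintype κ] {β : κ → Type*}
    [∀ i, MeasurableSpace (β i)] {X : ∀ i, Ω → β i} (hX : iIndepFun X μ)
    {Y : ι → Ω → ∀ i, β i} (hmY : ∀ k, Measurable (Y k)) (hY : iIndepFun Y μ)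
    (hYX : ∀ k, IdentDistrib (Y k) (fun ω i => X i ω) μ μ) :
    iIndepFun (fun (q : ι × κ) ω => Y q.1 ω q.2) μ :=
  iIndepFun_uncurry' (fun k i => (measurable_pi_apply i).comp (hmY k)) hY
    fun k => (hYX k).iIndepFun_eval hX

variable {ι κ : Type*} {β : κ → Type*} [mβ : ∀ i, MeasurableSpace (β i)]

abbrev sampleCoordSigma (Y : ι → Ω → ∀ i, β i) (S : Set κ) : MeasurableSpace Ω :=
  ⨆ q ∈ {q : ι × κ | q.2 ∈ S}, (mβ q.2).comap fun ω => Y q.1 ω q.2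

lemma sampleCoordSigma_le {Y : ι → Ω → ∀ i, β i} (hmY : ∀ k, Measurable (Y k)) (S : Set κ) :
    sampleCoordSigma Y S ≤ mΩ :=
  iSup₂_le fun q _ => ((measurable_pi_apply q.2).comp (hmY q.1)).comap_le

lemma measurable_sampleCoordSigma {Y : ι → Ω → ∀ i, β i} {S : Set κ} {i : κ} (hi : i ∈ S)
    (k : ι) : Measurable[sampleCoordSigma Y S] fun ω => Y k ω i :=
  Measurable.of_comap_le <| le_iSup₂_of_le (k, i) hi le_rfl

lemma iIndepFun.indep_sampleCoordSigma {Y : ι → Ω → ∀ i, β i}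
    (hmY : ∀ k, Measurable (Y k)) (h : iIndepFun (fun (q : ι × κ) ω => Y q.1 ω q.2) μ)
    {S T : Set κ} (hST : Disjoint S T) :
    Indep (sampleCoordSigma Y S) (sampleCoordSigma Y T) μ :=
  indep_iSup_of_disjoint (m := fun q : ι × κ => (mβ q.2).comap fun ω => Y q.1 ω q.2)
    (fun q => ((measurable_pi_apply q.2).comp (hmY q.1)).comap_le) h.iIndep
    (hST.preimage Prod.snd)

end ProbabilityTheory

section EmpiricalCharFun

variable {Ω : Type*} {n : ℕ}

lemma norm_empCF_le_one (g : Fin n → Ω → ℝ) (ω : Ω) : ‖empCF n g ω‖ ≤ 1 := by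
  calc ‖empCF n g ω‖ ≤ (n : ℝ)⁻¹ * ∑ k, ‖exp (g k ω * I)‖ := by
        rw [empCF, norm_mul, norm_inv, Complex.norm_natCast]
        gcongr
        exact norm_sum_le _ _
    _ = (n : ℝ)⁻¹ * n := by simp [norm_exp_ofReal_mul_I]
    _ ≤ 1 := by by_cases hn : (n : ℝ) = 0 <;> simp [hn]

lemma Measurable.empCF {_ : MeasurableSpace Ω} {g : Fin n → Ω → ℝ}
    (hg : ∀ k, Measurable (g k)) : Measurable (empCF n g) := by
  unfold _root_.empCF
  fun_prop

lemma conj_empCF (g : Fin n → Ω → ℝ) (ω : Ω) :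
    starRingEnd ℂ (empCF n g ω) = empCF n (fun k ω => -g k ω) ω := by
  simp [empCF, ← Complex.exp_conj]

variable {mΩ : MeasurableSpace Ω} {μ : Measure Ω}

lemma integrable_empCF [IsFiniteMeasure μ] {g : Fin n → Ω → ℝ} (hg : ∀ k, Measurable (g k)) :
    Integrable (empCF n g) μ :=
  .of_bound (Measurable.empCF hg).aestronglyMeasurable 1 (ae_of_all _ (norm_empCF_le_one g))

lemma integrable_empCF_sub_mul [IsFiniteMeasure μ] {g₁ g₂ g₃ : Fin n → Ω → ℝ}
    (hg₁ : ∀ k, Measurable (g₁ k)) (hg₂ : ∀ k, Measurable (g₂ k)) (hg₃ : ∀ k, Measurable (g₃ k)) :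
    Integrable (fun ω => empCF n g₁ ω - empCF n g₂ ω * empCF n g₃ ω) μ :=
  (integrable_empCF hg₁).sub ((integrable_empCF hg₂).mul_bdd
    (Measurable.empCF hg₃).aestronglyMeasurable (ae_of_all _ (norm_empCF_le_one g₃)))

lemma integral_mul_empCF {G : Ω → ℂ} (hG : Integrable G μ) {g : Fin n → Ω → ℝ}
    (hg : ∀ k, Measurable (g k)) :
    ∫ ω, G ω * empCF n g ω ∂μ = (n : ℂ)⁻¹ * ∑ k, ∫ ω, G ω * exp (g k ω * I) ∂μ := by
  simp_rw [empCF, mul_left_comm (G _)]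
  rw [integral_const_mul]
  congr 1
  simp_rw [Finset.mul_sum]
  refine integral_finsetSum _ ?_
  exact fun k _ => hG.mul_bdd (by fun_prop)
    (ae_of_all _ fun ω => (norm_exp_ofReal_mul_I _).le)

lemma integral_mul_exp_mul_I_of_indep {m₁ m₂ : MeasurableSpace Ω} (hm₁ : m₁ ≤ mΩ)
    (hm₂ : m₂ ≤ mΩ) (hind : Indep m₁ m₂ μ) {G : Ω → ℂ} (hG : Measurable[m₁] G) {h : Ω → ℝ}
    (hh : Measurable[m₂] h) :
    ∫ ω, G ω * exp (h ω * I) ∂μ = (∫ ω, G ω ∂μ) * ∫ ω, exp (h ω * I) ∂μ := by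
  have hexp : Measurable[m₂] fun ω => exp (h ω * I) := by fun_prop
  have hGe : IndepFun G (fun ω => exp (h ω * I)) μ :=
    (IndepFun_iff_Indep _ _ _).2
      (indep_of_indep_of_le_right (indep_of_indep_of_le_left hind hG.comap_le) hexp.comap_le)
  exact hGe.integral_fun_mul_eq_mul_integral (hG.mono hm₁ le_rfl).aestronglyMeasurable
    (hexp.mono hm₂ le_rfl).aestronglyMeasurable

/-- Independence gives `E[F e(g m) e(h r)] = E[F e(g m)] z` for all `m, r`, so averaging over the
diagonal `m = r` or over all pairs yields the same expectation. -/
theorem integral_mul_empCF_add_sub_mul_eq_zero {m₁ m₂ : MeasurableSpace Ω} (hm₁ : m₁ ≤ mΩ)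
    (hm₂ : m₂ ≤ mΩ) (hind : Indep m₁ m₂ μ) {F : Ω → ℂ} (hF : Measurable[m₁] F)
    (hFi : Integrable F μ) {g h : Fin n → Ω → ℝ} (hg : ∀ k, Measurable[m₁] (g k))
    (hh : ∀ k, Measurable[m₂] (h k)) {z : ℂ} (hz : ∀ k, ∫ ω, exp (h k ω * I) ∂μ = z) :
    ∫ ω, F ω * (empCF n (fun k ω => g k ω + h k ω) ω - empCF n g ω * empCF n h ω) ∂μ = 0 := by
  rcases Nat.eq_zero_or_pos n with rfl | hn
  · simp [empCF]
  have hg' : ∀ k, Measurable[mΩ] (g k) := fun k => (hg k).mono hm₁ le_rfl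
  have hh' : ∀ k, Measurable[mΩ] (h k) := fun k => (hh k).mono hm₂ le_rfl
  have hFg : Integrable (fun ω => F ω * empCF n g ω) μ :=
    hFi.mul_bdd (Measurable.empCF hg').aestronglyMeasurable (ae_of_all _ (norm_empCF_le_one g))
  have hdiag : ∫ ω, F ω * empCF n (fun k ω => g k ω + h k ω) ω ∂μ =
      (∫ ω, F ω * empCF n g ω ∂μ) * z := by
    rw [integral_mul_empCF (g := fun k ω => g k ω + h k ω) hFi fun k => (hg' k).add (hh' k),
      integral_mul_empCF hFi hg', mul_assoc, Finset.sum_mul]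
    congr 1
    refine Finset.sum_congr rfl fun k _ => ?_
    simp_rw [ofReal_add, add_mul, exp_add, ← mul_assoc]
    rw [integral_mul_exp_mul_I_of_indep hm₁ hm₂ hind (by fun_prop) (hh k), hz k]
  have hcross : ∫ ω, F ω * (empCF n g ω * empCF n h ω) ∂μ =
      (∫ ω, F ω * empCF n g ω ∂μ) * z := by
    simp_rw [← mul_assoc]
    rw [integral_mul_empCF hFg hh']
    simp_rw [integral_mul_exp_mul_I_of_indep (G := fun ω => F ω * empCF n g ω) hm₁ hm₂ hind
      (hF.mul (Measurable.empCF hg)) (hh _), hz]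
    simp [hn.ne']
  simp_rw [mul_sub]
  rw [integral_sub, hdiag, hcross, sub_self]
  · exact hFi.mul_bdd (Measurable.empCF fun k => (hg' k).add (hh' k)).aestronglyMeasurable
      (ae_of_all _ (norm_empCF_le_one _))
  · simp_rw [← mul_assoc]
    exact hFg.mul_bdd (Measurable.empCF hh').aestronglyMeasurable
      (ae_of_all _ (norm_empCF_le_one h))

theorem integral_empCF_add_sub_mul_eq_zero [IsFiniteMeasure μ] {m₁ m₂ : MeasurableSpace Ω}
    (hm₁ : m₁ ≤ mΩ) (hm₂ : m₂ ≤ mΩ) (hind : Indep m₁ m₂ μ) {g h : Fin n → Ω → ℝ}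
    (hg : ∀ k, Measurable[m₁] (g k)) (hh : ∀ k, Measurable[m₂] (h k)) {z : ℂ}
    (hz : ∀ k, ∫ ω, exp (h k ω * I) ∂μ = z) :
    ∫ ω, (empCF n (fun k ω => g k ω + h k ω) ω - empCF n g ω * empCF n h ω) ∂μ = 0 := by
  simpa only [one_mul] using integral_mul_empCF_add_sub_mul_eq_zero hm₁ hm₂ hind
    measurable_const (integrable_const 1) hg hh hz

end EmpiricalCharFun

theorem statement18_general {Ω : Type*} [MeasurableSpace Ω] (μ : Measure Ω) [IsProbabilityMeasure μ]
    (p : Fin 4 → ℕ) (X : ∀ i : Fin 4, Ω → EuclideanSpace ℝ (Fin (p i)))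
    (hXindep : iIndepFun X μ)
    (n : ℕ)
    (Y : Fin n → Ω → (∀ i : Fin 4, EuclideanSpace ℝ (Fin (p i))))
    (hmY : ∀ k, Measurable (Y k))
    (hYindep : iIndepFun Y μ)
    (hYid : ∀ k, IdentDistrib (Y k) (fun ω i => X i ω) μ μ)
    (t1 : EuclideanSpace ℝ (Fin (p 0))) (t2 : EuclideanSpace ℝ (Fin (p 1)))
    (s1 : EuclideanSpace ℝ (Fin (p 0)) × EuclideanSpace ℝ (Fin (p 1)) ×
      EuclideanSpace ℝ (Fin (p 2)))
    (s2 : EuclideanSpace ℝ (Fin (p 3))) :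
    (∫ ω, (empCF n (fun k ω => (⟪t1, Y k ω 0⟫ : ℝ) + (⟪t2, Y k ω 1⟫ : ℝ)) ω -
        empCF n (fun k ω => (⟪t1, Y k ω 0⟫ : ℝ)) ω *
          empCF n (fun k ω => (⟪t2, Y k ω 1⟫ : ℝ)) ω) ∂μ) = 0 ∧
    (∫ ω, (empCF n (fun k ω => (⟪s1.1, Y k ω 0⟫ : ℝ) + (⟪s1.2.1, Y k ω 1⟫ : ℝ) +
          (⟪s1.2.2, Y k ω 2⟫ : ℝ) + (⟪s2, Y k ω 3⟫ : ℝ)) ω -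
        empCF n (fun k ω => (⟪s1.1, Y k ω 0⟫ : ℝ) + (⟪s1.2.1, Y k ω 1⟫ : ℝ) +
            (⟪s1.2.2, Y k ω 2⟫ : ℝ)) ω *
          empCF n (fun k ω => (⟪s2, Y k ω 3⟫ : ℝ)) ω) ∂μ) = 0 ∧
    (∫ ω, ((empCF n (fun k ω => (⟪t1, Y k ω 0⟫ : ℝ) + (⟪t2, Y k ω 1⟫ : ℝ)) ω -
        empCF n (fun k ω => (⟪t1, Y k ω 0⟫ : ℝ)) ω *
          empCF n (fun k ω => (⟪t2, Y k ω 1⟫ : ℝ)) ω) *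
      (starRingEnd ℂ)
        (empCF n (fun k ω => (⟪s1.1, Y k ω 0⟫ : ℝ) + (⟪s1.2.1, Y k ω 1⟫ : ℝ) +
            (⟪s1.2.2, Y k ω 2⟫ : ℝ) + (⟪s2, Y k ω 3⟫ : ℝ)) ω -
          empCF n (fun k ω => (⟪s1.1, Y k ω 0⟫ : ℝ) + (⟪s1.2.1, Y k ω 1⟫ : ℝ) +
              (⟪s1.2.2, Y k ω 2⟫ : ℝ)) ω *
            empCF n (fun k ω => (⟪s2, Y k ω 3⟫ : ℝ)) ω)) ∂μ) = 0 := by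
  have hcoord := iIndepFun_sample_coord hXindep hmY hYindep hYid
  have hle := sampleCoordSigma_le hmY
  have hphase {S : Set (Fin 4)} {i : Fin 4} (hi : i ∈ S) (t : EuclideanSpace ℝ (Fin (p i)))
      (k : Fin n) : Measurable[sampleCoordSigma Y S] fun ω => ⟪t, Y k ω i⟫ :=
    measurable_const.inner (measurable_sampleCoordSigma hi k)
  have hident (φ : (∀ i, EuclideanSpace ℝ (Fin (p i))) → ℝ) (hφ : Measurable φ) (k : Fin n) :
      ∫ ω, exp (φ (Y k ω) * I) ∂μ = ∫ ω, exp (φ (fun i => X i ω) * I) ∂μ :=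
    ((hYid k).comp (by fun_prop : Measurable fun y => exp (φ y * I))).integral_eq
  have hindA : Indep (sampleCoordSigma Y {0}) (sampleCoordSigma Y {1}) μ :=
    hcoord.indep_sampleCoordSigma hmY (by simp)
  have hindB : Indep (sampleCoordSigma Y {0, 1, 2}) (sampleCoordSigma Y {3}) μ :=
    hcoord.indep_sampleCoordSigma hmY (by simp)
  have hphase012 (a : EuclideanSpace ℝ (Fin (p 0))) (b : EuclideanSpace ℝ (Fin (p 1)))
      (c : EuclideanSpace ℝ (Fin (p 2))) (k : Fin n) : Measurable[sampleCoordSigma Y {0, 1, 2}]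
      fun ω => ⟪a, Y k ω 0⟫ + ⟪b, Y k ω 1⟫ + ⟪c, Y k ω 2⟫ :=
    ((hphase (by simp) a k).add (hphase (by simp) b k)).add (hphase (by simp) c k)
  refine ⟨?_, ?_, ?_⟩
  · exact integral_empCF_add_sub_mul_eq_zero (hle _) (hle _) hindA
      (fun k => hphase (Set.mem_singleton _) t1 k) (fun k => hphase (Set.mem_singleton _) t2 k)
      fun k => hident (fun y => ⟪t2, y 1⟫) (by fun_prop) k
  · exact integral_empCF_add_sub_mul_eq_zero (hle _) (hle _) hindB (hphase012 _ _ _)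
      (fun k => hphase (Set.mem_singleton _) s2 k)
      fun k => hident (fun y => ⟪s2, y 3⟫) (by fun_prop) k
  · have hA : Measurable[sampleCoordSigma Y {0, 1, 2}] fun ω =>
        empCF n (fun k ω => (⟪t1, Y k ω 0⟫ : ℝ) + (⟪t2, Y k ω 1⟫ : ℝ)) ω -
          empCF n (fun k ω => (⟪t1, Y k ω 0⟫ : ℝ)) ω *
            empCF n (fun k ω => (⟪t2, Y k ω 1⟫ : ℝ)) ω :=
      (Measurable.empCF fun k => (hphase (by simp) t1 k).add (hphase (by simp) t2 k)).sub
        ((Measurable.empCF fun k => hphase (by simp) t1 k).mul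
          (Measurable.empCF fun k => hphase (by simp) t2 k))
    simp only [map_sub, map_mul, conj_empCF, neg_add, ← inner_neg_left]
    exact integral_mul_empCF_add_sub_mul_eq_zero (hle _) (hle _) hindB hA
      (integrable_empCF_sub_mul (fun k => by fun_prop) (fun k => by fun_prop) fun k => by fun_prop)
      (hphase012 _ _ _) (fun k => hphase (Set.mem_singleton _) (-s2) k)
      fun k => hident (fun y => ⟪-s2, y 3⟫) (by fun_prop) k

/-- Let `X_1, X_2, X_3, X_4` be mutually independent random vectors and let
`(Y^k)_{k=1}^n` be an i.i.d. sample of `(X_1, X_2, X_3, X_4)`. With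
`A(t₁,t₂) = φⁿ_{(X₁,X₂)}(t₁,t₂) − φⁿ_{X₁}(t₁) φⁿ_{X₂}(t₂)` and
`B(s₁,s₂) = φⁿ_{(X₁,X₂,X₃,X₄)}(s₁,s₂) − φⁿ_{(X₁,X₂,X₃)}(s₁) φⁿ_{X₄}(s₂)`,
we have `E[A] = 0`, `E[B] = 0`, and `E[A · conj B] = 0`; in particular `A` and `B`
are uncorrelated. -/
theorem statement18 {Ω : Type*} [MeasurableSpace Ω] (μ : Measure Ω) [IsProbabilityMeasure μ]
    (p : Fin 4 → ℕ) (X : ∀ i : Fin 4, Ω → EuclideanSpace ℝ (Fin (p i)))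
    (hmX : ∀ i, Measurable (X i))
    (hXindep : iIndepFun X μ)
    (n : ℕ) (hn : 0 < n)
    (Y : Fin n → Ω → (∀ i : Fin 4, EuclideanSpace ℝ (Fin (p i))))
    (hmY : ∀ k, Measurable (Y k))
    (hYindep : iIndepFun Y μ)
    (hYid : ∀ k, IdentDistrib (Y k) (fun ω i => X i ω) μ μ)
    (t1 : EuclideanSpace ℝ (Fin (p 0))) (t2 : EuclideanSpace ℝ (Fin (p 1)))
    (s1 : EuclideanSpace ℝ (Fin (p 0)) × EuclideanSpace ℝ (Fin (p 1)) ×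
      EuclideanSpace ℝ (Fin (p 2)))
    (s2 : EuclideanSpace ℝ (Fin (p 3))) :
    (∫ ω, (empCF n (fun k ω => (⟪t1, Y k ω 0⟫ : ℝ) + (⟪t2, Y k ω 1⟫ : ℝ)) ω -
        empCF n (fun k ω => (⟪t1, Y k ω 0⟫ : ℝ)) ω *
          empCF n (fun k ω => (⟪t2, Y k ω 1⟫ : ℝ)) ω) ∂μ) = 0 ∧
    (∫ ω, (empCF n (fun k ω => (⟪s1.1, Y k ω 0⟫ : ℝ) + (⟪s1.2.1, Y k ω 1⟫ : ℝ) +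
          (⟪s1.2.2, Y k ω 2⟫ : ℝ) + (⟪s2, Y k ω 3⟫ : ℝ)) ω -
        empCF n (fun k ω => (⟪s1.1, Y k ω 0⟫ : ℝ) + (⟪s1.2.1, Y k ω 1⟫ : ℝ) +
            (⟪s1.2.2, Y k ω 2⟫ : ℝ)) ω *
          empCF n (fun k ω => (⟪s2, Y k ω 3⟫ : ℝ)) ω) ∂μ) = 0 ∧
    (∫ ω, ((empCF n (fun k ω => (⟪t1, Y k ω 0⟫ : ℝ) + (⟪t2, Y k ω 1⟫ : ℝ)) ω -
        empCF n (fun k ω => (⟪t1, Y k ω 0⟫ : ℝ)) ω *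
          empCF n (fun k ω => (⟪t2, Y k ω 1⟫ : ℝ)) ω) *
      (starRingEnd ℂ)
        (empCF n (fun k ω => (⟪s1.1, Y k ω 0⟫ : ℝ) + (⟪s1.2.1, Y k ω 1⟫ : ℝ) +
            (⟪s1.2.2, Y k ω 2⟫ : ℝ) + (⟪s2, Y k ω 3⟫ : ℝ)) ω -
          empCF n (fun k ω => (⟪s1.1, Y k ω 0⟫ : ℝ) + (⟪s1.2.1, Y k ω 1⟫ : ℝ) +
              (⟪s1.2.2, Y k ω 2⟫ : ℝ)) ω *
            empCF n (fun k ω => (⟪s2, Y k ω 3⟫ : ℝ)) ω)) ∂μ) = 0 :=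
  statement18_general μ p X hXindep n Y hmY hYindep hYid t1 t2 s1 s2
end
end
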